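/- Let G be a finite group acting transitively on a finite set Ω, let H be the stabilizer of a point of Ω, let p be a prime dividing |H|, let D be a union of conjugacy classes of G each consisting of elements of order p of maximal p-fixity, and let g ∈ H ∩ D. If the action of G on Ω is binary, then H contains Δ_∞(g, D). In particular, if g ∈ H is any element of maximal p-fixity, then H contains the terminal component group Δ_∞(g). -/

import Mathlib

/-- `I` and `J` are `r`-related under the action of `G`. -/
def Related (G : Type*) {Ω : Type*} [Group G] [MulAction G Ω] {n : ℕ} (r : ℕ)
    (I J : Fin n → Ω) : Prop :=
  ∀ k : Fin r → Fin n, StrictMono k → ∃ g : G, ∀ i, g • I (k i) = J (k i)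

/-- The action of `G` on `Ω` is binary. -/
def IsBinary (G Ω : Type*) [Group G] [MulAction G Ω] : Prop :=
  ∀ n : ℕ, 2 ≤ n → ∀ I J : Fin n → Ω, Related G 2 I J → Related G n I J

/-- The graph `Γ(D)` associated to a subset `D` of a group. -/
def classGraph {G : Type*} [Group G] (D : Set G) : SimpleGraph G where
  Adj g h := g ≠ h ∧ g ∈ D ∧ h ∈ D ∧ Commute g h ∧ (g * h⁻¹ ∈ D ∨ h * g⁻¹ ∈ D)
  symm := by
    constructor
    rintro g h ⟨hne, hg, hh, hc, hd⟩
    exact ⟨hne.symm, hh, hg, hc.symm, hd.symm⟩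
  loopless := by constructor; rintro g ⟨hne, -⟩; exact hne rfl

/-- `Δ(g, D)`: the subgroup generated by the vertices in the connected component
of `Γ(D)` containing `g`. -/
def Delta {G : Type*} [Group G] (g : G) (D : Set G) : Subgroup G :=
  Subgroup.closure {h | h ∈ D ∧ (classGraph D).Reachable g h}

/-- The component group `Δ(g)` of `g` : here `D` is the conjugacy class of `g`. -/
def DeltaC {G : Type*} [Group G] (g : G) : Subgroup G :=
  Delta g {x | IsConj g x}

/-- `D` is a union of conjugacy classes. -/
def IsUnionConjClasses {G : Type*} [Group G] (D : Set G) : Prop :=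
  ∀ x ∈ D, ∀ y : G, IsConj x y → y ∈ D

/-- The fixity of `g` acting on `Ω`: the number of fixed points of `g`. -/
noncomputable def fixity (G Ω : Type*) [Group G] [MulAction G Ω] (g : G) : ℕ :=
  Nat.card (MulAction.fixedBy Ω g)

/-- `g` is an element of order `p` of maximal `p`-fixity. -/
def MaxPFixity (G Ω : Type*) [Group G] [MulAction G Ω] (p : ℕ) (g : G) : Prop :=
  orderOf g = p ∧ ∀ h : G, orderOf h = p → fixity G Ω h ≤ fixity G Ω g

/-- The ascending sequence of unions of conjugacy classes `D_1 = D`,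
`D_{i+1}` = union of the conjugacy classes of elements of order `p`
meeting `Δ(g, D_i)`. -/
def DSeq {G : Type*} [Group G] (g : G) (D : Set G) (p : ℕ) : ℕ → Set G
  | 0 => D
  | i + 1 => {x : G | orderOf x = p ∧ ∃ y ∈ Delta g (DSeq g D p i), IsConj x y}

/-- `Δ_∞(g, D)`: the union of the chain `Δ(g, D_1) ≤ Δ(g, D_2) ≤ ⋯`. -/
def DeltaInf {G : Type*} [Group G] (g : G) (D : Set G) (p : ℕ) : Subgroup G :=
  ⨆ i : ℕ, Delta g (DSeq g D p i)

/-- The terminal component group `Δ_∞(g)` of an element `g` of order `p`. -/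
def DeltaInfC {G : Type*} [Group G] (g : G) (p : ℕ) : Subgroup G :=
  DeltaInf g {x | IsConj g x} p

/-!
In a binary action, two adjacent vertices `x`, `y` of `Γ(D)` have the same fixed-point set:
otherwise the map fixing `Fix x ∪ Fix y` and acting as `x` on the rest of `Fix (x * y⁻¹)` is
realised pairwise by `1`, `x` or `y`, hence by a single element, and a power of it of order `p`
fixes more points than `x`. So every generator of `Δ(g, D)` fixes every point fixed by `g`.
Consequently the elements of `Δ(g, D)` have at least the fixity of `g`, so the classes of
elements of order `p` meeting `Δ(g, D)` again have maximal `p`-fixity, and induction along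
`D₁, D₂, …` shows that `Δ_∞(g, D)` fixes every point fixed by `g`.
-/

open MulAction Function

section Fixity

variable {G Ω : Type*} [Group G] [MulAction G Ω]

lemma fixity_eq_ncard (g : G) : fixity G Ω g = (fixedBy Ω g).ncard :=
  Nat.card_coe_set_eq _

lemma fixity_inv (g : G) : fixity G Ω g⁻¹ = fixity G Ω g := by
  simp only [fixity, fixedBy_inv]

lemma IsConj.fixity_eq {g h : G} (hc : IsConj g h) : fixity G Ω g = fixity G Ω h := by
  obtain ⟨c, rfl⟩ := isConj_iff.mp hc
  rw [fixity_eq_ncard, fixity_eq_ncard, ← smul_fixedBy, Set.ncard_smul_set]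

lemma IsConj.maxPFixity {p : ℕ} {g h : G} (hc : IsConj g h) (hg : MaxPFixity G Ω p g) :
    MaxPFixity G Ω p h := by
  have hfix := hc.fixity_eq (Ω := Ω)
  obtain ⟨c, hc⟩ := hc
  exact ⟨hc.orderOf_eq ▸ hg.1, hfix ▸ hg.2⟩

lemma MaxPFixity.fixity_eq {p : ℕ} {g h : G} (hg : MaxPFixity G Ω p g) (hh : MaxPFixity G Ω p h) :
    fixity G Ω g = fixity G Ω h :=
  le_antisymm (hh.2 g hg.1) (hg.2 h hh.1)

lemma fixedBy_eq_of_subset_of_fixity_le [Finite Ω] {g h : G} (hs : fixedBy Ω g ⊆ fixedBy Ω h)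
    (hle : fixity G Ω h ≤ fixity G Ω g) : fixedBy Ω g = fixedBy Ω h :=
  Set.eq_of_subset_of_ncard_le hs (by rwa [← fixity_eq_ncard, ← fixity_eq_ncard])

lemma Commute.smul_mem_fixedBy_iff {g h : G} (hc : Commute g h) {a : Ω} :
    g • a ∈ fixedBy Ω h ↔ a ∈ fixedBy Ω h := by
  rw [mem_fixedBy, mem_fixedBy, ← mul_smul, ← hc.eq, mul_smul, smul_left_cancel_iff]

end Fixity

section PrimeOrder

variable {G Ω : Type*} [Group G] [MulAction G Ω] {p : ℕ}

lemma prime_dvd_of_pow_smul_eq_self (hp : p.Prime) {x : G} (hx : orderOf x = p) {a : Ω}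
    (ha : x • a ≠ a) {n : ℕ} (hn : x ^ n • a = a) : p ∣ n := by
  have := Fact.mk hp
  have hper : IsPeriodicPt (x • ·) p a := by
    rw [IsPeriodicPt, IsFixedPt, smul_iterate, ← hx, pow_orderOf_eq_one]
    exact one_smul G a
  rwa [pow_smul_eq_iff_minimalPeriod_dvd, minimalPeriod_eq_prime hper ha] at hn

lemma exists_orderOf_eq_fixedBy_superset [Finite G] (hp : p.Prime) {x h : G} (hx : orderOf x = p)
    {Z : Set Ω} (hZ : Set.MapsTo (x • ·) Z Z) (hhx : Set.EqOn (h • ·) (x • ·) Z) {a : Ω}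
    (haZ : a ∈ Z) (ha : x • a ≠ a) :
    ∃ w : G, orderOf w = p ∧ fixedBy Ω h ⊆ fixedBy Ω w := by
  have hpow : ∀ n : ℕ, ∀ b ∈ Z, h ^ n • b = x ^ n • b := by
    intro n
    induction n with
    | zero => simp
    | succ n ih =>
      intro b hb
      rw [pow_succ, pow_succ, mul_smul, mul_smul, show h • b = x • b from hhx hb, ih _ (hZ hb)]
  have hdvd : p ∣ orderOf h := by
    refine prime_dvd_of_pow_smul_eq_self hp hx ha ?_
    rw [← hpow _ a haZ, pow_orderOf_eq_one, one_smul]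
  exact ⟨h ^ (orderOf h / p), orderOf_pow_orderOf_div (orderOf_pos h).ne' hdvd,
    fun b hb => (stabilizer G b).pow_mem hb _⟩

end PrimeOrder

section Binary

variable {G Ω : Type*} [Group G] [MulAction G Ω]

lemma IsBinary.exists_smul_eq {ι : Type*} [Finite ι] (hbin : IsBinary G Ω) (I J : ι → Ω)
    (hpair : ∀ i j, ∃ g : G, g • I i = J i ∧ g • I j = J j) : ∃ g : G, ∀ i, g • I i = J i := by
  obtain ⟨n, ⟨e⟩⟩ := Finite.exists_equiv_fin ι
  rcases lt_or_ge n 2 with hn | hn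
  · rcases isEmpty_or_nonempty ι with hι | ⟨⟨i₀⟩⟩
    · exact ⟨1, isEmptyElim⟩
    · have : Subsingleton ι := e.subsingleton_congr.mpr (Fin.subsingleton_iff_le_one.mpr (by omega))
      obtain ⟨g, hg, -⟩ := hpair i₀ i₀
      exact ⟨g, fun i => Subsingleton.elim i₀ i ▸ hg⟩
  · have hrel : Related G 2 (I ∘ e.symm) (J ∘ e.symm) := fun k _ => by
      obtain ⟨g, h0, h1⟩ := hpair (e.symm (k 0)) (e.symm (k 1))
      exact ⟨g, Fin.forall_fin_two.mpr ⟨h0, h1⟩⟩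
    obtain ⟨g, hg⟩ := hbin n hn _ _ hrel id strictMono_id
    exact ⟨g, fun i => by simpa using hg (e i)⟩

lemma IsBinary.exists_fixedBy_union_subset [Finite Ω] (hbin : IsBinary G Ω) {x y : G}
    {Z : Set Ω} (hxy : Set.EqOn (x • ·) (y • ·) Z) :
    ∃ h : G, fixedBy Ω x ∪ fixedBy Ω y ⊆ fixedBy Ω h ∧
      Set.EqOn (h • ·) (x • ·) (Z \ (fixedBy Ω x ∪ fixedBy Ω y)) := by
  classical
  set A := fixedBy Ω x ∪ fixedBy Ω y
  let J : Ω → Ω := fun a => if a ∈ A then a else x • a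
  have h1 : ∀ a ∈ A, (1 : G) • a = J a := fun a ha => by simp [J, ha]
  have hx : ∀ a ∈ A ∪ Z, a ∉ fixedBy Ω y \ fixedBy Ω x → x • a = J a := by
    intro a ha ha'
    by_cases haA : a ∈ A
    · simp only [J, if_pos haA]
      exact haA.elim id fun hay => by_contra fun hax => ha' ⟨hay, hax⟩
    · simp only [J, if_neg haA]
  have hy : ∀ a ∈ A ∪ Z, a ∉ fixedBy Ω x \ fixedBy Ω y → y • a = J a := by
    intro a ha ha'
    by_cases haA : a ∈ A
    · simp only [J, if_pos haA]
      exact haA.elim (fun hax => by_contra fun hay => ha' ⟨hax, hay⟩) id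
    · simp only [J, if_neg haA]
      exact (hxy (ha.resolve_left haA)).symm
  obtain ⟨h, hh⟩ := hbin.exists_smul_eq (ι := ↥(A ∪ Z)) (↑) (fun a => J a) <| by
    rintro ⟨a, ha⟩ ⟨b, hb⟩
    by_cases hxab : a ∉ fixedBy Ω y \ fixedBy Ω x ∧ b ∉ fixedBy Ω y \ fixedBy Ω x
    · exact ⟨x, hx a ha hxab.1, hx b hb hxab.2⟩
    by_cases hyab : a ∉ fixedBy Ω x \ fixedBy Ω y ∧ b ∉ fixedBy Ω x \ fixedBy Ω y
    · exact ⟨y, hy a ha hyab.1, hy b hb hyab.2⟩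
    refine ⟨1, h1 a ?_, h1 b ?_⟩ <;> simp only [A, Set.mem_union, Set.mem_sdiff] at hxab hyab ⊢ <;>
      tauto
  refine ⟨h, fun a ha => ?_, fun a ha => ?_⟩
  · simpa [J, ha] using hh ⟨a, .inl ha⟩
  · simpa [J, ha.2] using hh ⟨a, .inr ha.1⟩

end Binary

section ComponentGroup

variable {G Ω : Type*} [Group G] [MulAction G Ω] [Finite G] [Finite Ω] {p : ℕ}

theorem IsBinary.fixedBy_eq_of_commute (hbin : IsBinary G Ω) (hp : p.Prime) {x y : G}
    (hx : MaxPFixity G Ω p x) (hxy : Commute x y) (hy : fixity G Ω y = fixity G Ω x)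
    (hz : fixity G Ω (x * y⁻¹) = fixity G Ω x) : fixedBy Ω x = fixedBy Ω y := by
  set z := x * y⁻¹
  have hxz : Commute x z := (Commute.refl x).mul_right hxy.inv_right
  have hzy : Commute z y := hxy.mul_left (Commute.refl y).inv_left
  by_contra hne
  have hyx : ¬ fixedBy Ω y ⊆ fixedBy Ω x := fun h =>
    hne (fixedBy_eq_of_subset_of_fixity_le h hy.ge).symm
  have hEq : Set.EqOn (x • ·) (y • ·) (fixedBy Ω z) := fun a (ha : z • a = a) => by
    change x • a = y • a
    rw [show x = z * y by simp [z], hzy.eq, mul_smul, ha]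
  have hzx : ¬ fixedBy Ω z ⊆ fixedBy Ω x := fun h => by
    have hFz : fixedBy Ω z = fixedBy Ω x := fixedBy_eq_of_subset_of_fixity_le h hz.ge
    refine hne (fixedBy_eq_of_subset_of_fixity_le (fun a ha => ?_) hy.le)
    exact (hEq (hFz ▸ ha : a ∈ fixedBy Ω z)).symm.trans ha
  obtain ⟨a, haz, hax⟩ := Set.not_subset.mp hzx
  have hay : a ∉ fixedBy Ω y := fun hay => hax <| by
    simpa [z] using fixedBy_mul Ω z y ⟨haz, hay⟩
  obtain ⟨h, hA, hZ⟩ := hbin.exists_fixedBy_union_subset hEq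
  have hmaps : Set.MapsTo (x • ·) (fixedBy Ω z \ (fixedBy Ω x ∪ fixedBy Ω y))
      (fixedBy Ω z \ (fixedBy Ω x ∪ fixedBy Ω y)) := fun b hb => by
    simpa only [Set.mem_sdiff, Set.mem_union, hxz.smul_mem_fixedBy_iff, hxy.smul_mem_fixedBy_iff,
      (Commute.refl x).smul_mem_fixedBy_iff] using hb
  obtain ⟨w, hw, hhw⟩ :=
    exists_orderOf_eq_fixedBy_superset hp hx.1 hmaps hZ ⟨haz, by simp [hax, hay]⟩ hax
  have hle : (fixedBy Ω x ∪ fixedBy Ω y).ncard ≤ fixity G Ω x := by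
    calc _ ≤ (fixedBy Ω w).ncard := Set.ncard_le_ncard (hA.trans hhw)
      _ = fixity G Ω w := (fixity_eq_ncard w).symm
      _ ≤ fixity G Ω x := hx.2 w hw
  have hlt : fixity G Ω x < (fixedBy Ω x ∪ fixedBy Ω y).ncard := by
    rw [fixity_eq_ncard]
    exact Set.ncard_lt_ncard (Set.ssubset_iff_subset_ne.mpr ⟨Set.subset_union_left,
      fun h => hyx (h ▸ Set.subset_union_right)⟩)
  omega

lemma fixedBy_eq_of_adj (hbin : IsBinary G Ω) (hp : p.Prime) {D : Set G}
    (hD : ∀ x ∈ D, MaxPFixity G Ω p x) {x y : G} (hadj : (classGraph D).Adj x y) :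
    fixedBy Ω x = fixedBy Ω y := by
  obtain ⟨-, hxD, hyD, hxy, hzD | hzD⟩ := hadj
  all_goals
    have hx := hD x hxD
    refine hbin.fixedBy_eq_of_commute hp hx hxy ((hD y hyD).fixity_eq hx) ?_
  · exact (hD _ hzD).fixity_eq hx
  · rw [← inv_inv (x * y⁻¹), mul_inv_rev, inv_inv, fixity_inv]
    exact (hD _ hzD).fixity_eq hx

lemma fixedBy_eq_of_reachable (hbin : IsBinary G Ω) (hp : p.Prime) {D : Set G}
    (hD : ∀ x ∈ D, MaxPFixity G Ω p x) {x y : G} (hr : (classGraph D).Reachable x y) :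
    fixedBy Ω x = fixedBy Ω y := by
  obtain ⟨w⟩ := hr
  induction w with
  | nil => rfl
  | cons hadj _ ih => exact (fixedBy_eq_of_adj hbin hp hD hadj).trans ih

lemma delta_le_stabilizer (hbin : IsBinary G Ω) (hp : p.Prime) {D : Set G}
    (hD : ∀ x ∈ D, MaxPFixity G Ω p x) {g : G} {a : Ω} (ha : g • a = a) :
    Delta g D ≤ stabilizer G a :=
  (Subgroup.closure_le _).mpr fun _ ⟨_, hr⟩ =>
    (fixedBy_eq_of_reachable hbin hp hD hr ▸ ha : a ∈ fixedBy Ω _)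

lemma maxPFixity_of_mem_dSeq (hbin : IsBinary G Ω) (hp : p.Prime) {D : Set G}
    (hD : ∀ x ∈ D, MaxPFixity G Ω p x) {g : G} (hg : MaxPFixity G Ω p g) :
    ∀ i, ∀ x ∈ DSeq g D p i, MaxPFixity G Ω p x
  | 0 => hD
  | i + 1 => by
    rintro x ⟨hxp, y, hy, hxy⟩
    have hgy : fixedBy Ω g ⊆ fixedBy Ω y := fun a ha =>
      delta_le_stabilizer hbin hp (maxPFixity_of_mem_dSeq hbin hp hD hg i) ha hy
    refine ⟨hxp, fun v hv => ?_⟩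
    calc fixity G Ω v ≤ fixity G Ω g := hg.2 v hv
      _ ≤ fixity G Ω y := by
        rw [fixity_eq_ncard, fixity_eq_ncard]; exact Set.ncard_le_ncard hgy
      _ = fixity G Ω x := hxy.symm.fixity_eq

theorem deltaInf_le_stabilizer (hbin : IsBinary G Ω) (hp : p.Prime) {D : Set G}
    (hD : ∀ x ∈ D, MaxPFixity G Ω p x) {g : G} (hg : MaxPFixity G Ω p g) {a : Ω}
    (ha : g • a = a) : DeltaInf g D p ≤ stabilizer G a :=
  iSup_le fun i => delta_le_stabilizer hbin hp (maxPFixity_of_mem_dSeq hbin hp hD hg i) ha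

end ComponentGroup

theorem stmt4_general {G Ω : Type*} [Group G] [Fintype G] [Fintype Ω] [MulAction G Ω]
    (ω : Ω)
    (p : ℕ) (hp : p.Prime)
    (D : Set G)
    (hDfix : ∀ x ∈ D, MaxPFixity G Ω p x)
    (g : G) (hgH : g ∈ MulAction.stabilizer G ω) (hgD : g ∈ D)
    (hbin : IsBinary G Ω) :
    DeltaInf g D p ≤ MulAction.stabilizer G ω ∧
      ∀ g' ∈ MulAction.stabilizer G ω, MaxPFixity G Ω p g' →
        DeltaInfC g' p ≤ MulAction.stabilizer G ω :=
  ⟨deltaInf_le_stabilizer hbin hp hDfix (hDfix g hgD) hgH, fun _ hg'H hg' =>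
    deltaInf_le_stabilizer hbin hp (fun _ hx => IsConj.maxPFixity hx hg') hg' hg'H⟩

theorem stmt4 {G Ω : Type*} [Group G] [Fintype G] [Fintype Ω] [MulAction G Ω]
    [MulAction.IsPretransitive G Ω] (ω : Ω)
    (p : ℕ) (hp : p.Prime)
    (hdvd : p ∣ Nat.card (MulAction.stabilizer G ω))
    (D : Set G) (hD : IsUnionConjClasses D)
    (hDfix : ∀ x ∈ D, MaxPFixity G Ω p x)
    (g : G) (hgH : g ∈ MulAction.stabilizer G ω) (hgD : g ∈ D)
    (hbin : IsBinary G Ω) :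
    DeltaInf g D p ≤ MulAction.stabilizer G ω ∧
      ∀ g' ∈ MulAction.stabilizer G ω, MaxPFixity G Ω p g' →
        DeltaInfC g' p ≤ MulAction.stabilizer G ω :=
  stmt4_general ω p hp D hDfix g hgH hgD hbin
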